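/- For every matching M with no left nesting, lcr(M) = rne(M) + rcr(M); consequently also lcr'(M) = rne(M) + rcr'(M), where lcr'(M) = #(Lcr(M) ∖ {i−1 : i ∈ LRcr(M)}) and rcr'(M) = rcr(M) − lrcr(M). -/

import Mathlib

/-! ## Permutations of `{1,…,n}` encoded as functions `ℕ → ℕ` (zero outside `[1,n]`). -/

/-- `f` represents a permutation of `{1,…,n}` in one-line notation:
`f j` is the value in position `j` (for `1 ≤ j ≤ n`), and `f` is `0` elsewhere. -/
def IsPermOn (n : ℕ) (f : ℕ → ℕ) : Prop :=
  Set.BijOn f (Set.Icc 1 n) (Set.Icc 1 n) ∧ ∀ i, i ∉ Set.Icc 1 n → f i = 0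

/-- Ascent tops: values `f j` with `2 ≤ j ≤ n` and `f (j-1) < f j`. -/
def permAsc (n : ℕ) (f : ℕ → ℕ) : Set ℕ :=
  {v | ∃ j, 2 ≤ j ∧ j ≤ n ∧ f (j - 1) < f j ∧ v = f j}

/-- Short ascents (adjacencies): ascent tops with `f (j-1) + 1 = f j`. -/
def permAdjAsc (n : ℕ) (f : ℕ → ℕ) : Set ℕ :=
  {v | ∃ j, 2 ≤ j ∧ j ≤ n ∧ f (j - 1) + 1 = f j ∧ v = f j}

/-- Occurrences of the pattern `P`: ascent tops `f j` such that the value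
`f j - 1` occurs in a position greater than `j`. -/
def permP (n : ℕ) (f : ℕ → ℕ) : Set ℕ :=
  {v | ∃ j, 2 ≤ j ∧ j ≤ n ∧ f (j - 1) < f j ∧ v = f j ∧
    ∃ k, j < k ∧ k ≤ n ∧ f k = f j - 1}

/-- Occurrences of the pattern `Q`: ascent tops `f j` such that the value
`f j - 1` occurs in a position less than `j - 1`. -/
def permQ (n : ℕ) (f : ℕ → ℕ) : Set ℕ :=
  {v | ∃ j, 2 ≤ j ∧ j ≤ n ∧ f (j - 1) < f j ∧ v = f j ∧
    ∃ k, 1 ≤ k ∧ k + 1 < j ∧ f k = f j - 1}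

/-- Silly ascents: `(Asc(π) ∪ {π 1}) \ {n}`. -/
def permAscSilly (n : ℕ) (f : ℕ → ℕ) : Set ℕ :=
  (permAsc n f ∪ {f 1}) \ {n}

/-- Occurrences of the silly pattern `P`: silly ascents `a` such that the value
`a + 1` occurs to the left of the value `a`. -/
def permPSilly (n : ℕ) (f : ℕ → ℕ) : Set ℕ :=
  {a | a ∈ permAscSilly n f ∧ ∃ j k, 1 ≤ j ∧ j < k ∧ k ≤ n ∧ f j = a + 1 ∧ f k = a}

/-- Occurrences of the silly pattern `Q`: silly ascents `a` such that the value
`a + 1` occurs to the right of the value `a`. -/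
def permQSilly (n : ℕ) (f : ℕ → ℕ) : Set ℕ :=
  {a | a ∈ permAscSilly n f ∧ ∃ j k, 1 ≤ j ∧ j < k ∧ k ≤ n ∧ f j = a ∧ f k = a + 1}

/-- Right minima: values having no smaller value to their right. -/
def permRmin (n : ℕ) (f : ℕ → ℕ) : Set ℕ :=
  {v | ∃ j, 1 ≤ j ∧ j ≤ n ∧ v = f j ∧ ∀ k, j < k → k ≤ n → f j < f k}

/-- Right maxima: values having no larger value to their right. -/
def permRmax (n : ℕ) (f : ℕ → ℕ) : Set ℕ :=
  {v | ∃ j, 1 ≤ j ∧ j ≤ n ∧ v = f j ∧ ∀ k, j < k → k ≤ n → f k < f j}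

/-- The number of components of the finest decomposition of a permutation into
direct sums: the number of `k ∈ [1,n]` such that `f` maps `{1,…,k}` into itself. -/
noncomputable def permComp (n : ℕ) (f : ℕ → ℕ) : ℕ :=
  Set.ncard {k | 1 ≤ k ∧ k ≤ n ∧ ∀ i, 1 ≤ i → i ≤ k → f i ≤ k}

/-- The number of descents. -/
noncomputable def permDes (n : ℕ) (f : ℕ → ℕ) : ℕ :=
  Set.ncard {j | 2 ≤ j ∧ j ≤ n ∧ f j < f (j - 1)}

/-- Ascent bottoms: values `f j` with `1 ≤ j < n` and `f j < f (j+1)`. -/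
def permAscBottom (n : ℕ) (f : ℕ → ℕ) : Set ℕ :=
  {v | ∃ j, 1 ≤ j ∧ j + 1 ≤ n ∧ f j < f (j + 1) ∧ v = f j}

/-- Long ascent bottoms: values `f j` with `1 ≤ j < n` and `f j < f (j+1) - 1`. -/
def permAscBottomProper (n : ℕ) (f : ℕ → ℕ) : Set ℕ :=
  {v | ∃ j, 1 ≤ j ∧ j + 1 ≤ n ∧ f j + 1 < f (j + 1) ∧ v = f j}

/-! ## Matchings on `{1,…,2n}`.

The arcs are indexed `1,…,n` in increasing order of their closers; `opener i`
and `closer i` are the endpoints of the `i`-th arc (and `0` outside `[1,n]`). -/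

structure Matching (n : ℕ) where
  opener : ℕ → ℕ
  closer : ℕ → ℕ
  opener_lt_closer : ∀ i, 1 ≤ i → i ≤ n → opener i < closer i
  closer_mono : ∀ i j, 1 ≤ i → i < j → j ≤ n → closer i < closer j
  opener_mem : ∀ i, 1 ≤ i → i ≤ n → opener i ∈ Set.Icc 1 (2 * n)
  closer_mem : ∀ i, 1 ≤ i → i ≤ n → closer i ∈ Set.Icc 1 (2 * n)
  opener_inj : ∀ i j, 1 ≤ i → i ≤ n → 1 ≤ j → j ≤ n → opener i = opener j → i = j
  opener_ne_closer : ∀ i j, 1 ≤ i → i ≤ n → 1 ≤ j → j ≤ n → opener i ≠ closer j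
  cover : ∀ m ∈ Set.Icc 1 (2 * n), ∃ i, 1 ≤ i ∧ i ≤ n ∧ (opener i = m ∨ closer i = m)
  opener_eq_zero : ∀ i, i ∉ Set.Icc 1 n → opener i = 0
  closer_eq_zero : ∀ i, i ∉ Set.Icc 1 n → closer i = 0

namespace Matching

variable {n : ℕ}

/-- No left nesting: no pair of arcs `A, B` with `opener A = opener B + 1`
and `closer A < closer B`. -/
def NoLeftNesting (M : Matching n) : Prop :=
  ∀ i j, 1 ≤ i → i ≤ n → 1 ≤ j → j ≤ n →
    ¬(M.opener i = M.opener j + 1 ∧ M.closer i < M.closer j)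

/-- Right nestings, indexed by the arc with the larger closer. -/
def RneSet (M : Matching n) : Set ℕ :=
  {i | 2 ≤ i ∧ i ≤ n ∧ M.opener i < M.opener (i - 1) ∧ M.closer i = M.closer (i - 1) + 1}

/-- Right crossings, indexed by the arc with the larger closer. -/
def RcrSet (M : Matching n) : Set ℕ :=
  {i | 2 ≤ i ∧ i ≤ n ∧ M.opener (i - 1) < M.opener i ∧ M.opener i < M.closer (i - 1) ∧
    M.closer i = M.closer (i - 1) + 1}

/-- Double crossings (both left and right crossings), indexed by the right arc. -/
def LRcrSet (M : Matching n) : Set ℕ :=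
  {i | i ∈ M.RcrSet ∧ M.opener i = M.opener (i - 1) + 1}

/-- Right single crossings. -/
def RcrpSet (M : Matching n) : Set ℕ := M.RcrSet \ M.LRcrSet

/-- Right adjacencies, indexed by the arc with the larger closer. -/
def RadjSet (M : Matching n) : Set ℕ :=
  {i | 2 ≤ i ∧ i ≤ n ∧ M.closer i = M.closer (i - 1) + 1}

/-- Left crossings, indexed by the arc with the smaller opener. -/
def LcrSet (M : Matching n) : Set ℕ :=
  {i | 1 ≤ i ∧ i ≤ n ∧ ∃ j, 1 ≤ j ∧ j ≤ n ∧ M.opener j = M.opener i + 1 ∧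
    M.opener j < M.closer i ∧ M.closer i < M.closer j}

/-- `Min(M)`: arcs whose opener lies to the left of the first closer. -/
def MinSet (M : Matching n) : Set ℕ :=
  {i | 1 ≤ i ∧ i ≤ n ∧ M.opener i < M.closer 1}

/-- The number of components of the finest decomposition of `M` into direct sums:
the number of `k ∈ [1,n]` such that `{1,…,2k}` is a union of arcs. -/
noncomputable def comp (M : Matching n) : ℕ :=
  Set.ncard {k | 1 ≤ k ∧ k ≤ n ∧
    ∀ i, 1 ≤ i → i ≤ n → (M.closer i ≤ 2 * k ∨ 2 * k < M.opener i)}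

/-- `S` is the direct sum of `M` (size `n₁`) and `M'` (size `n₂`): the diagrams
side by side, the elements of `M'` shifted by `2 n₁`. -/
def IsDsum {n₁ n₂ m : ℕ} (M : Matching n₁) (M' : Matching n₂) (S : Matching m) : Prop :=
  m = n₁ + n₂ ∧
  (∀ i, 1 ≤ i → i ≤ n₁ → S.opener i = M.opener i ∧ S.closer i = M.closer i) ∧
  (∀ i, 1 ≤ i → i ≤ n₂ → S.opener (n₁ + i) = M'.opener i + 2 * n₁ ∧
    S.closer (n₁ + i) = M'.closer i + 2 * n₁)

end Matching

/-! ## 0-1-fillings of partition shapes.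

The shape has `len ≥ 1` columns; column `i` (for `1 ≤ i ≤ len`) has height
`shape i ≥ 1`, weakly increasing from left to right (and `shape i = 0` outside
`[1, len]`).  The dots are the cells holding a `1`. -/

structure Filling where
  len : ℕ
  shape : ℕ → ℕ
  dots : Set (ℕ × ℕ)
  len_pos : 1 ≤ len
  shape_pos : ∀ i, 1 ≤ i → i ≤ len → 1 ≤ shape i
  shape_mono : ∀ i j, 1 ≤ i → i ≤ j → j ≤ len → shape i ≤ shape j
  shape_eq_zero : ∀ i, i ∉ Set.Icc 1 len → shape i = 0
  dots_mem : ∀ p ∈ dots, 1 ≤ p.1 ∧ p.1 ≤ len ∧ 1 ≤ p.2 ∧ p.2 ≤ shape p.1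

namespace Filling

/-- The number of dots of a filling. -/
noncomputable def nDots (T : Filling) : ℕ := Set.ncard T.dots

/-- Every column contains exactly one dot. -/
def ColumnStrict (T : Filling) : Prop :=
  ∀ i, 1 ≤ i → i ≤ T.len → ∃! j, (i, j) ∈ T.dots

/-- Every column contains at least one dot. -/
def ColumnPositive (T : Filling) : Prop :=
  ∀ i, 1 ≤ i → i ≤ T.len → ∃ j, (i, j) ∈ T.dots

/-- The length of row `j`: the number of columns of height at least `j`. -/
noncomputable def rowLen (T : Filling) (j : ℕ) : ℕ :=
  Set.ncard {i | 1 ≤ i ∧ i ≤ T.len ∧ j ≤ T.shape i}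

/-- A shape is flat if its nonempty rows have pairwise distinct lengths. -/
def Flat (T : Filling) : Prop :=
  ∀ j j', 1 ≤ j → 1 ≤ j' → j ≠ j' → 1 ≤ T.rowLen j → 1 ≤ T.rowLen j' →
    T.rowLen j ≠ T.rowLen j'

/-- A staircase shape: `shape = (1, 2, …, len)`. -/
def Staircase (T : Filling) : Prop :=
  ∀ i, 1 ≤ i → i ≤ T.len → T.shape i = i

/-- The lazy set `X(T)`: columns having the same height as their left neighbour. -/
def lazySet (T : Filling) : Set ℕ :=
  {i | 2 ≤ i ∧ i ≤ T.len ∧ T.shape (i - 1) = T.shape i}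

/-- Descents of a column-strict filling: columns whose dot is strictly lower
than the dot of the previous column. -/
def DesSet (T : Filling) : Set ℕ :=
  {i | 2 ≤ i ∧ i ≤ T.len ∧ ∃ j j', (i - 1, j) ∈ T.dots ∧ (i, j') ∈ T.dots ∧ j' < j}

/-- Ascents of a column-strict filling. -/
def AscSet (T : Filling) : Set ℕ :=
  {i | 2 ≤ i ∧ i ≤ T.len ∧ ∃ j j', (i - 1, j) ∈ T.dots ∧ (i, j') ∈ T.dots ∧ j < j'}

/-- Repetitions of a column-strict filling. -/
def RepSet (T : Filling) : Set ℕ :=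
  {i | 2 ≤ i ∧ i ≤ T.len ∧ ∃ j, (i - 1, j) ∈ T.dots ∧ (i, j) ∈ T.dots}

/-- Columns with a dot in their topmost cell. -/
def MaxSet (T : Filling) : Set ℕ :=
  {i | 1 ≤ i ∧ i ≤ T.len ∧ (i, T.shape i) ∈ T.dots}

/-- Columns with a dot on the bottom row. -/
def MinSet (T : Filling) : Set ℕ :=
  {i | 1 ≤ i ∧ i ≤ T.len ∧ (i, 1) ∈ T.dots}

/-- For a column-strict filling: columns whose dot is strictly closer to the top
of its column than is any dot strictly to the right. -/
def RmaxColSet (T : Filling) : Set ℕ :=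
  {i | ∃ j, (i, j) ∈ T.dots ∧
    ∀ i' j', (i', j') ∈ T.dots → i < i' → T.shape i - j < T.shape i' - j'}

/-- `rmax(T)`: the number of dots strictly closer to the top of their column
than is any dot strictly to the right. -/
noncomputable def rmaxDots (T : Filling) : ℕ :=
  Set.ncard {p | p ∈ T.dots ∧
    ∀ q ∈ T.dots, p.1 < q.1 → T.shape p.1 - p.2 < T.shape q.1 - q.2}

/-- `lmin(T)`: the number of dots strictly to the left of any dot strictly below. -/
noncomputable def lminDots (T : Filling) : ℕ :=
  Set.ncard {p | p ∈ T.dots ∧ ∀ q ∈ T.dots, q.2 < p.2 → p.1 < q.1}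

/-- The number of components of the finest decomposition of `T` into direct sums:
the number of columns `k` after which the filling can be cut. -/
noncomputable def comp (T : Filling) : ℕ :=
  Set.ncard {k | 1 ≤ k ∧ k ≤ T.len ∧ (k = T.len ∨ T.shape k < T.shape (k + 1)) ∧
    ∀ p ∈ T.dots, k < p.1 → T.shape k < p.2}

/-- `S = T ⊕ T'`: `T'` is placed strictly to the north-east of `T`, the
rectangle below `T'` being filled with empty cells. -/
def IsDsum (T T' S : Filling) : Prop :=
  S.len = T.len + T'.len ∧
  (∀ i, 1 ≤ i → i ≤ T.len → S.shape i = T.shape i) ∧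
  (∀ i, 1 ≤ i → i ≤ T'.len → S.shape (T.len + i) = T.shape T.len + T'.shape i) ∧
  S.dots = T.dots ∪ (fun p : ℕ × ℕ => (p.1 + T.len, p.2 + T.shape T.len)) '' T'.dots

/-- A square shape. -/
def Square (T : Filling) : Prop :=
  ∀ i, 1 ≤ i → i ≤ T.len → T.shape i = T.len

/-- Enriched permutation filling: a positive filling of a square shape in which
a dot is the leftmost dot of its row iff it is the topmost dot of its column. -/
def Enriched (T : Filling) : Prop :=
  T.Square ∧
  (∀ i, 1 ≤ i → i ≤ T.len → ∃ j, (i, j) ∈ T.dots) ∧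
  (∀ j, 1 ≤ j → j ≤ T.len → ∃ i, (i, j) ∈ T.dots) ∧
  (∀ p ∈ T.dots,
    ((∀ q ∈ T.dots, q.2 = p.2 → p.1 ≤ q.1) ↔ (∀ q ∈ T.dots, q.1 = p.1 → q.2 ≤ p.2)))

/-- `S = R ⊞ R'`: boxed sum of enriched permutation fillings. -/
def IsBoxSum (R R' S : Filling) : Prop :=
  S.len = R.len + R'.len ∧
  (∀ i, 1 ≤ i → i ≤ S.len → S.shape i = S.len) ∧
  S.dots = R.dots ∪ (fun p : ℕ × ℕ => (p.1 + R.len, p.2 + R.len)) '' R'.dots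

/-- The number of components of the finest decomposition into boxed sums. -/
noncomputable def boxcomp (T : Filling) : ℕ :=
  Set.ncard {k | 1 ≤ k ∧ k ≤ T.len ∧
    ∀ p ∈ T.dots, (p.1 ≤ k ∧ p.2 ≤ k) ∨ (k < p.1 ∧ k < p.2)}

end Filling

/-! ## Barred permutations, hatted permutations and marked matchings. -/

/-- A barred permutation: a permutation of `{1,…,n}` together with a set of
barred ascent tops. -/
structure BarredPerm where
  n : ℕ
  toFun : ℕ → ℕ
  X : Set ℕ
  n_pos : 1 ≤ n
  isPerm : IsPermOn n toFun
  X_subset : X ⊆ permAsc n toFun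

/-- Direct sum of barred permutations. -/
def BarredPerm.IsDsum (B B' C : BarredPerm) : Prop :=
  C.n = B.n + B'.n ∧
  (∀ i, C.toFun i = if i ≤ B.n then B.toFun i
    else if i ≤ B.n + B'.n then B'.toFun (i - B.n) + B.n else 0) ∧
  C.X = B.X ∪ (fun a => a + B.n) '' B'.X

/-- A hatted permutation: a permutation of `{1,…,n}` together with a set of
hatted silly ascents. -/
structure HattedPerm where
  n : ℕ
  toFun : ℕ → ℕ
  X : Set ℕ
  n_pos : 1 ≤ n
  isPerm : IsPermOn n toFun
  X_subset : X ⊆ permAscSilly n toFun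

/-- Direct sum of hatted permutations. -/
def HattedPerm.IsDsum (B B' C : HattedPerm) : Prop :=
  C.n = B.n + B'.n ∧
  (∀ i, C.toFun i = if i ≤ B.n then B.toFun i
    else if i ≤ B.n + B'.n then B'.toFun (i - B.n) + B.n else 0) ∧
  C.X = B.X ∪ (fun a => a + B.n) '' B'.X

/-- A marked matching: a matching without left nestings together with a set of
marked right adjacencies. -/
structure MarkedMatching where
  n : ℕ
  n_pos : 1 ≤ n
  M : Matching n
  noLeftNesting : M.NoLeftNesting
  X : Set ℕ
  X_subset : X ⊆ M.RadjSet

/-- Direct sum of marked matchings. -/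
def MarkedMatching.IsDsum (A B C : MarkedMatching) : Prop :=
  Matching.IsDsum A.M B.M C.M ∧ C.X = A.X ∪ (fun a => a + A.n) '' B.X

/-!
Without left nestings, `i ↦ opener i` maps the left crossings bijectively onto the positions
`m` at which `m` and `m + 1` are both openers, while `i ↦ closer (i - 1)` maps the right
adjacencies, i.e. the right nestings and right crossings, bijectively onto the positions at
which `m` and `m + 1` are both closers. A word with `n` openers and `n` closers that starts with
an opener and ends with a closer has as many opener–opener as closer–closer neighbours. For the
second identity, `i ↦ i - 1` embeds the double crossings into the left crossings.
-/

open Finset in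
/-- Read `p` as a word in `T`, `F` on the positions `m ∈ [a, b)`, each followed by `p (m + 1)`:
then `#TT - #FF = #T - #F + [p b] - [p a]`, here arranged without subtraction. -/
theorem card_filter_and_succ_add_card_filter_not (p : ℕ → Prop) [DecidablePred p] {a b : ℕ}
    (hab : a ≤ b) :
    #{m ∈ Ico a b | p m ∧ p (m + 1)} + #{m ∈ Ico a b | ¬p m} + (if p a then 1 else 0) =
      #{m ∈ Ico a b | ¬p m ∧ ¬p (m + 1)} + #{m ∈ Ico a b | p m} + (if p b then 1 else 0) := by
  induction b, hab using Nat.le_induction with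
  | base => simp
  | succ b hab ih =>
    simp only [card_filter, sum_Ico_succ_top hab] at ih ⊢
    by_cases hb : p b <;> by_cases hb' : p (b + 1) <;>
      simp only [hb, hb', if_true, if_false, not_true_eq_false, not_false_eq_true, and_self,
        and_true, and_false] at ih ⊢ <;>
      omega

namespace Matching

variable {n : ℕ} (M : Matching n)

def IsOpener (m : ℕ) : Prop := ∃ i, 1 ≤ i ∧ i ≤ n ∧ M.opener i = m

def IsCloser (m : ℕ) : Prop := ∃ i, 1 ≤ i ∧ i ≤ n ∧ M.closer i = m

def adjOpeners : Set ℕ := {m | M.IsOpener m ∧ M.IsOpener (m + 1)}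

def adjClosers : Set ℕ := {m | M.IsCloser m ∧ M.IsCloser (m + 1)}

theorem strictMonoOn_closer : StrictMonoOn M.closer (Set.Icc 1 n) :=
  fun i hi j hj hij => M.closer_mono i j hi.1 hij hj.2

theorem IsOpener.mem_Ico {m : ℕ} (hm : M.IsOpener m) : m ∈ Finset.Ico 1 (2 * n) := by
  obtain ⟨i, hi, hin, rfl⟩ := hm
  have := M.opener_lt_closer i hi hin
  have := M.opener_mem i hi hin
  have := M.closer_mem i hi hin
  simp only [Set.mem_Icc, Finset.mem_Ico] at *
  omega

theorem IsCloser.mem_Icc {m : ℕ} (hm : M.IsCloser m) : m ∈ Set.Icc 1 (2 * n) := by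
  obtain ⟨i, hi, hin, rfl⟩ := hm
  exact M.closer_mem i hi hin

theorem isCloser_iff_not_isOpener {m : ℕ} (hm : m ∈ Set.Icc 1 (2 * n)) :
    M.IsCloser m ↔ ¬M.IsOpener m := by
  constructor
  · rintro ⟨j, hj, hjn, rfl⟩ ⟨i, hi, hin, hij⟩
    exact M.opener_ne_closer i j hi hin hj hjn hij
  · intro hm'
    obtain ⟨i, hi, hin, ho | hc⟩ := M.cover m hm
    · exact absurd ⟨i, hi, hin, ho⟩ hm'
    · exact ⟨i, hi, hin, hc⟩

theorem isOpener_one (hn : 0 < n) : M.IsOpener 1 := by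
  by_contra h
  obtain ⟨i, hi, hin, hc⟩ := (M.isCloser_iff_not_isOpener ⟨le_rfl, by omega⟩).2 h
  have := M.opener_lt_closer i hi hin
  have := (M.opener_mem i hi hin).1
  omega

theorem not_isOpener_two_mul : ¬M.IsOpener (2 * n) := fun h => by
  have := Finset.mem_Ico.1 h.mem_Ico
  omega

open Classical in
theorem card_filter_isOpener : (Finset.filter M.IsOpener (Finset.Ico 1 (2 * n))).card = n := by
  have himage : Finset.filter M.IsOpener (Finset.Ico 1 (2 * n)) =
      (Finset.Icc 1 n).image M.opener := by
    ext m
    simp only [Finset.mem_filter, Finset.mem_image, Finset.mem_Icc]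
    refine ⟨fun ⟨_, i, hi, hin, hm⟩ => ⟨i, ⟨hi, hin⟩, hm⟩, fun ⟨i, ⟨hi, hin⟩, hm⟩ => ?_⟩
    have hop : M.IsOpener m := ⟨i, hi, hin, hm⟩
    exact ⟨hop.mem_Ico, hop⟩
  rw [himage, Finset.card_image_of_injOn, Nat.card_Icc, Nat.add_sub_cancel]
  intro i hi j hj
  simp only [Finset.coe_Icc, Set.mem_Icc] at hi hj
  exact M.opener_inj i j hi.1 hi.2 hj.1 hj.2

open Classical in
theorem ncard_adjOpeners_eq_ncard_adjClosers : M.adjOpeners.ncard = M.adjClosers.ncard := by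
  obtain rfl | hn := Nat.eq_zero_or_pos n
  · simp [adjOpeners, adjClosers, IsOpener, IsCloser]
  have hOpeners : M.adjOpeners =
      ↑(Finset.filter (fun m => M.IsOpener m ∧ M.IsOpener (m + 1)) (Finset.Ico 1 (2 * n))) := by
    ext m
    simp only [adjOpeners, Set.mem_ofPred_eq, Finset.coe_filter]
    exact ⟨fun h => ⟨h.1.mem_Ico, h⟩, And.right⟩
  have hClosers : M.adjClosers =
      ↑(Finset.filter (fun m => ¬M.IsOpener m ∧ ¬M.IsOpener (m + 1)) (Finset.Ico 1 (2 * n))) := by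
    ext m
    simp only [adjClosers, Set.mem_ofPred_eq, Finset.coe_filter, Finset.mem_Ico]
    constructor
    · rintro ⟨hm, hm'⟩
      obtain ⟨hm1, -⟩ := hm.mem_Icc
      obtain ⟨-, hm2⟩ := hm'.mem_Icc
      rw [M.isCloser_iff_not_isOpener hm.mem_Icc] at hm
      rw [M.isCloser_iff_not_isOpener hm'.mem_Icc] at hm'
      exact ⟨⟨hm1, by omega⟩, hm, hm'⟩
    · rintro ⟨⟨h1, h2⟩, hm, hm'⟩
      rw [M.isCloser_iff_not_isOpener ⟨h1, by omega⟩,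
        M.isCloser_iff_not_isOpener ⟨by omega, by omega⟩]
      exact ⟨hm, hm'⟩
  have hbalance := card_filter_and_succ_add_card_filter_not M.IsOpener (a := 1) (b := 2 * n)
    (by omega)
  have hsplit := Finset.card_filter_add_card_filter_not (s := Finset.Ico 1 (2 * n)) M.IsOpener
  rw [if_pos (M.isOpener_one hn), if_neg M.not_isOpener_two_mul, M.card_filter_isOpener]
    at hbalance
  rw [M.card_filter_isOpener, Nat.card_Ico] at hsplit
  rw [hOpeners, hClosers, Set.ncard_coe_finset, Set.ncard_coe_finset]
  omega

/-- Without left nestings, the arc with opener `m` left-crosses the arc with opener `m + 1`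
as soon as both openers exist. -/
theorem image_opener_LcrSet (h : M.NoLeftNesting) : M.opener '' M.LcrSet = M.adjOpeners := by
  ext m
  constructor
  · rintro ⟨i, ⟨hi, hin, j, hj, hjn, hij, -⟩, rfl⟩
    exact ⟨⟨i, hi, hin, rfl⟩, j, hj, hjn, hij⟩
  · rintro ⟨⟨i, hi, hin, rfl⟩, j, hj, hjn, hij⟩
    have hne : M.closer i ≠ M.closer j := fun hc => by
      have := M.strictMonoOn_closer.injOn ⟨hi, hin⟩ ⟨hj, hjn⟩ hc
      subst this
      omega
    have := M.opener_lt_closer i hi hin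
    have := M.opener_ne_closer j i hj hjn hi hin
    have := h j i hj hjn hi hin
    exact ⟨i, ⟨hi, hin, j, hj, hjn, hij, by omega, by omega⟩, rfl⟩

theorem injOn_opener_LcrSet : Set.InjOn M.opener M.LcrSet :=
  fun i hi j hj => M.opener_inj i j hi.1 hi.2.1 hj.1 hj.2.1

theorem image_closer_pred_RadjSet :
    (fun i => M.closer (i - 1)) '' M.RadjSet = M.adjClosers := by
  ext m
  constructor
  · rintro ⟨i, ⟨hi, hin, hc⟩, rfl⟩
    refine ⟨⟨i - 1, by omega, by omega, rfl⟩, i, by omega, hin, hc⟩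
  · rintro ⟨⟨i, hi, hin, rfl⟩, j, hj, hjn, hc⟩
    have hij : i < j := (M.strictMonoOn_closer.lt_iff_lt ⟨hi, hin⟩ ⟨hj, hjn⟩).1 (by omega)
    have hj' : j = i + 1 := by
      by_contra hne
      have := M.closer_mono i (i + 1) hi (by omega) (by omega)
      have := M.closer_mono (i + 1) j (by omega) (by omega) hjn
      omega
    subst hj'
    exact ⟨i + 1, ⟨by omega, hjn, hc⟩, rfl⟩

theorem injOn_closer_pred_RadjSet : Set.InjOn (fun i => M.closer (i - 1)) M.RadjSet := by
  rintro i ⟨hi, hin, -⟩ j ⟨hj, hjn, -⟩ hc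
  have := M.strictMonoOn_closer.injOn ⟨by omega, by omega⟩ ⟨by omega, by omega⟩ hc
  omega

theorem RadjSet_eq_RneSet_union_RcrSet : M.RadjSet = M.RneSet ∪ M.RcrSet := by
  ext i
  constructor
  · rintro ⟨hi, hin, hc⟩
    have hne : M.opener i ≠ M.opener (i - 1) := fun ho => by
      have := M.opener_inj i (i - 1) (by omega) hin (by omega) (by omega) ho
      omega
    rcases hne.lt_or_gt with hlt | hgt
    · exact Or.inl ⟨hi, hin, hlt, hc⟩
    · have := M.opener_lt_closer i (by omega) hin
      have := M.opener_ne_closer i (i - 1) (by omega) hin (by omega) (by omega)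
      exact Or.inr ⟨hi, hin, hgt, by omega, hc⟩
  · rintro (⟨hi, hin, -, hc⟩ | ⟨hi, hin, -, -, hc⟩) <;> exact ⟨hi, hin, hc⟩

theorem disjoint_RneSet_RcrSet : Disjoint M.RneSet M.RcrSet :=
  Set.disjoint_left.2 fun _ hne hcr => (hne.2.2.1.trans hcr.2.2.1).false

theorem LcrSet_subset_Icc : M.LcrSet ⊆ Set.Icc 1 n := fun _ hi => ⟨hi.1, hi.2.1⟩

theorem RcrSet_subset_Icc : M.RcrSet ⊆ Set.Icc 1 n :=
  fun _ hi => ⟨one_le_two.trans hi.1, hi.2.1⟩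

theorem RneSet_subset_Icc : M.RneSet ⊆ Set.Icc 1 n :=
  fun _ hi => ⟨one_le_two.trans hi.1, hi.2.1⟩

theorem ncard_RadjSet : M.RadjSet.ncard = M.RneSet.ncard + M.RcrSet.ncard := by
  rw [RadjSet_eq_RneSet_union_RcrSet, Set.ncard_union_eq M.disjoint_RneSet_RcrSet
    ((Set.finite_Icc 1 n).subset M.RneSet_subset_Icc)
    ((Set.finite_Icc 1 n).subset M.RcrSet_subset_Icc)]

theorem ncard_LcrSet_eq_ncard_RadjSet (h : M.NoLeftNesting) :
    M.LcrSet.ncard = M.RadjSet.ncard := by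
  rw [← M.injOn_opener_LcrSet.ncard_image, M.image_opener_LcrSet h,
    ← M.injOn_closer_pred_RadjSet.ncard_image, M.image_closer_pred_RadjSet,
    ncard_adjOpeners_eq_ncard_adjClosers]

theorem image_pred_LRcrSet_subset_LcrSet : (fun i => i - 1) '' M.LRcrSet ⊆ M.LcrSet := by
  rintro _ ⟨i, ⟨⟨hi, hin, -, hlt, hc⟩, ho⟩, rfl⟩
  show i - 1 ∈ M.LcrSet
  exact ⟨by omega, by omega, i, by omega, hin, ho, hlt, by omega⟩

theorem injOn_pred_LRcrSet : Set.InjOn (fun i => i - 1) M.LRcrSet := by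
  intro i hi j hj hij
  have := hi.1.1
  have := hj.1.1
  simp only at hij
  omega

end Matching

/-- In a matching without left nestings,
`lcr = rne + rcr` and `lcr' = rne + rcr'`. -/
theorem lcr_eq_rne_add_rcr (n : ℕ) (M : Matching n) (h : M.NoLeftNesting) :
    M.LcrSet.ncard = M.RneSet.ncard + M.RcrSet.ncard ∧
    (M.LcrSet \ (fun i => i - 1) '' M.LRcrSet).ncard =
      M.RneSet.ncard + (M.RcrSet.ncard - M.LRcrSet.ncard) := by
  have hLcr : M.LcrSet.ncard = M.RneSet.ncard + M.RcrSet.ncard := by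
    rw [M.ncard_LcrSet_eq_ncard_RadjSet h, M.ncard_RadjSet]
  refine ⟨hLcr, ?_⟩
  have hLcr_finite := (Set.finite_Icc 1 n).subset M.LcrSet_subset_Icc
  have hLRcr_le : M.LRcrSet.ncard ≤ M.RcrSet.ncard :=
    Set.ncard_le_ncard (fun _ hi => hi.1) ((Set.finite_Icc 1 n).subset M.RcrSet_subset_Icc)
  rw [Set.ncard_sdiff M.image_pred_LRcrSet_subset_LcrSet
    (hLcr_finite.subset M.image_pred_LRcrSet_subset_LcrSet), M.injOn_pred_LRcrSet.ncard_image]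
  omega
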